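/- Let ⟨G, Eℓ⟩ be a two-player game graph with live edges and let A = {A_1, …, A_r} be a generalized co-Büchi winning condition, where each A_a ⊆ V. Define Z* := νY_0. μX_0. ⋃_{a=1}^{r} νY_a. [ Apre(Y_0, X_0) ∪ (A_a ∩ Cpre(Y_a)) ]. Then Z* equals the winning region W of Player 0 in the fair adversarial game over ⟨G, Eℓ⟩ for the winning condition φ = ⋁_{a=1}^{r} ◇□A_a (i.e. the set of plays π such that for some a, π(i) ∈ A_a for all but finitely many i). Moreover, there exists a memoryless Player-0 strategy that wins the fair adversarial game for φ from every vertex of Z*. -/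

import Mathlib

/-!
Soundness: on `Z*`, Player 0 moves memorylessly, descending a stage of the inner least fixpoint
`μX₀` when possible and otherwise staying in the set `νYₐ` through which the vertex entered its
stage. Along a fair play the least stage visited infinitely often is eventually never left, since
a live edge to a lower stage would be taken; from then on the play stays in one `νYₐ` with a
non-increasing index `a`, hence eventually in `Aₐ`.

Completeness: the complement of `Z*` is the least fixpoint of the dual operator, and its
approximants are levels for Player 1. Player 1 escapes to a lower level whenever a live edge would
leave the current one; within a level it cycles through the pairs, using the dual attractor of
each to leave `Aₐ`, and serves the live edges of each vertex round-robin, at most once per vertex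
and phase, so that the attractor still makes progress.
-/

/-- Least fixed point of a set transformer (Knaster–Tarski form). -/
def lfpSet {V : Type*} (f : Set V → Set V) : Set V := sInf {X | f X ⊆ X}

/-- Greatest fixed point of a set transformer (Knaster–Tarski form). -/
def gfpSet {V : Type*} (f : Set V → Set V) : Set V := sSup {X | X ⊆ f X}

/-- A two-player game graph with live edges: vertices are partitioned into
Player-0 vertices `V0` and Player-1 vertices `V1`, every vertex has a successor,
and live edges `El` are Player-1 edges. -/
structure LiveGameGraph (V : Type*) where
  V0 : Set V
  V1 : Set V
  E : V → V → Prop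
  El : V → V → Prop
  cover : V0 ∪ V1 = Set.univ
  disj : V0 ∩ V1 = ∅
  succ_nonempty : ∀ v : V, ∃ w, E v w
  live_sub : ∀ v w, El v w → v ∈ V1 ∧ E v w

namespace LiveGameGraph

variable {V : Type*}

/-- Pre∃0(S) -/
def pre0 (Gm : LiveGameGraph V) (S : Set V) : Set V :=
  {v | v ∈ Gm.V0 ∧ ∃ w, Gm.E v w ∧ w ∈ S}

/-- Pre∀1(S) -/
def pre1 (Gm : LiveGameGraph V) (S : Set V) : Set V :=
  {v | v ∈ Gm.V1 ∧ ∀ w, Gm.E v w → w ∈ S}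

/-- Cpre(S) -/
def cpre (Gm : LiveGameGraph V) (S : Set V) : Set V := Gm.pre0 S ∪ Gm.pre1 S

/-- Lpre∃(T) -/
def lpre (Gm : LiveGameGraph V) (T : Set V) : Set V :=
  {v | ∃ w, Gm.El v w ∧ w ∈ T}

/-- Apre(S,T) -/
def apre (Gm : LiveGameGraph V) (S T : Set V) : Set V :=
  Gm.cpre T ∪ (Gm.lpre T ∩ Gm.pre1 S)

end LiveGameGraph

namespace LiveGameGraph

variable {V : Type*}

/-- A play is strongly transition fair if every live edge whose source is visited
infinitely often is itself taken infinitely often. -/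
def StronglyFair (Gm : LiveGameGraph V) (π : ℕ → V) : Prop :=
  ∀ v w, Gm.El v w → {i | π i = v}.Infinite → {i | π i = v ∧ π (i + 1) = w}.Infinite

/-- A Player-0 strategy: given the history (the prefix before the current vertex)
and the current vertex, it chooses an `E`-successor whenever the current vertex
belongs to Player 0. -/
def Strategy0 (Gm : LiveGameGraph V) (ρ : List V → V → V) : Prop :=
  ∀ h v, v ∈ Gm.V0 → Gm.E v (ρ h v)

/-- A Player-1 strategy. -/
def Strategy1 (Gm : LiveGameGraph V) (ρ : List V → V → V) : Prop :=
  ∀ h v, v ∈ Gm.V1 → Gm.E v (ρ h v)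

/-- The play compliant with the strategies `ρ0` and `ρ1` starting at `v0`. -/
def Compliant (Gm : LiveGameGraph V) (ρ0 ρ1 : List V → V → V) (v0 : V)
    (π : ℕ → V) : Prop :=
  π 0 = v0 ∧ ∀ i : ℕ,
    (π i ∈ Gm.V0 → π (i + 1) = ρ0 (List.ofFn fun j : Fin i => π j.1) (π i)) ∧
    (π i ∈ Gm.V1 → π (i + 1) = ρ1 (List.ofFn fun j : Fin i => π j.1) (π i))

/-- Player 0 wins the fair adversarial game for the winning condition `φ`
from `v0` using the strategy `ρ0`. -/
def WinsFrom (Gm : LiveGameGraph V) (φ : (ℕ → V) → Prop)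
    (ρ0 : List V → V → V) (v0 : V) : Prop :=
  Gm.Strategy0 ρ0 ∧ ∀ ρ1, Gm.Strategy1 ρ1 → ∀ π, Gm.Compliant ρ0 ρ1 v0 π →
    (Gm.StronglyFair π → φ π)

/-- The winning region of Player 0 in the fair adversarial game for `φ`. -/
def WinningRegion (Gm : LiveGameGraph V) (φ : (ℕ → V) → Prop) : Set V :=
  {v0 | ∃ ρ0, Gm.WinsFrom φ ρ0 v0}

end LiveGameGraph

section Fixpoints

variable {V : Type*} {f g : Set V → Set V} {S : Set V} {v w : V} {n : ℕ}

theorem lfpSet_subset (h : f S ⊆ S) : lfpSet f ⊆ S := sInf_le h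

theorem subset_gfpSet (h : S ⊆ f S) : S ⊆ gfpSet f := le_sSup h

theorem map_lfpSet (hf : Monotone f) : f (lfpSet f) = lfpSet f := OrderHom.map_lfp ⟨f, hf⟩

theorem map_gfpSet (hf : Monotone f) : f (gfpSet f) = gfpSet f := OrderHom.map_gfp ⟨f, hf⟩

theorem lfpSet_mono (h : ∀ S, f S ⊆ g S) : lfpSet f ⊆ lfpSet g :=
  le_sInf fun _ hX => lfpSet_subset ((h _).trans hX)

theorem gfpSet_mono (h : ∀ S, f S ⊆ g S) : gfpSet f ⊆ gfpSet g :=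
  sSup_le fun _ hX => subset_gfpSet (hX.trans (h _))

theorem compl_gfpSet (f : Set V → Set V) : (gfpSet f)ᶜ = lfpSet fun S => (f Sᶜ)ᶜ := by
  rw [gfpSet, compl_sSup', lfpSet]
  congr 1
  ext X
  refine ⟨?_, fun h => ⟨Xᶜ, Set.compl_subset_comm.1 h, compl_compl X⟩⟩
  rintro ⟨Y, hY, rfl⟩
  simpa using hY

theorem iterate_subset_lfpSet (hf : Monotone f) (n : ℕ) : f^[n] ∅ ⊆ lfpSet f := by
  induction n with
  | zero => exact Set.empty_subset _
  | succ n ih =>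
    rw [Function.iterate_succ_apply', ← map_lfpSet hf]
    exact hf ih

theorem exists_iterate_eq_lfpSet [Finite V] (hf : Monotone f) : ∃ n, f^[n] ∅ = lfpSet f := by
  obtain ⟨n, hn⟩ := WellFoundedGT.monotone_chain_condition
    ⟨fun n => f^[n] ∅, hf.monotone_iterate_of_le_map (Set.empty_subset _)⟩
  refine ⟨n, (iterate_subset_lfpSet hf n).antisymm (lfpSet_subset ?_)⟩
  have h := hn (n + 1) n.le_succ
  simp only [OrderHom.coe_mk, Function.iterate_succ_apply'] at h
  exact h.symm.le

theorem mem_lfpSet_iff [Finite V] (hf : Monotone f) : v ∈ lfpSet f ↔ ∃ n, v ∈ f^[n] ∅ := by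
  obtain ⟨n, hn⟩ := exists_iterate_eq_lfpSet hf
  exact ⟨fun h => ⟨n, hn ▸ h⟩, fun ⟨m, hm⟩ => iterate_subset_lfpSet hf m hm⟩

noncomputable def iterRank (f : Set V → Set V) (v : V) : ℕ := sInf {n | v ∈ f (f^[n] ∅)}

theorem iterRank_le (h : v ∈ f (f^[n] ∅)) : iterRank f v ≤ n := Nat.sInf_le h

theorem mem_map_iterate_iterRank [Finite V] (hf : Monotone f) (h : v ∈ lfpSet f) :
    v ∈ f (f^[iterRank f v] ∅) := by
  obtain ⟨n, hn⟩ := (mem_lfpSet_iff hf).1 h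
  cases n with
  | zero => exact absurd hn (Set.notMem_empty v)
  | succ n =>
    rw [Function.iterate_succ_apply'] at hn
    exact Nat.sInf_mem (s := {n | v ∈ f (f^[n] ∅)}) ⟨n, hn⟩

theorem iterRank_lt (h : w ∈ f^[iterRank f v] ∅) : iterRank f w < iterRank f v := by
  obtain ⟨n, hn⟩ : ∃ n, iterRank f v = n + 1 := by
    refine Nat.exists_eq_succ_of_ne_zero fun h0 => ?_
    rw [h0] at h
    exact Set.notMem_empty w h
  rw [hn, Function.iterate_succ_apply'] at h
  exact hn ▸ Nat.lt_succ_of_le (iterRank_le h)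

end Fixpoints

section Sequences

theorem Set.Finite.eventually_atTop_notMem {s : Set ℕ} (hs : s.Finite) :
    ∀ᶠ i in Filter.atTop, i ∉ s :=
  Nat.cofinite_eq_atTop ▸ hs.eventually_cofinite_notMem

theorem exists_forall_ge_eq_of_antitone {f : ℕ → ℕ} (hf : Antitone f) :
    ∃ N, ∀ n ≥ N, f n = f N := by
  obtain ⟨N, hN⟩ := WellFoundedGT.monotone_chain_condition (α := ℕᵒᵈ) ⟨f, hf⟩
  exact ⟨N, fun n hn => (hN n hn).symm⟩

theorem exists_le_of_infinite_increments {c : ℕ → ℕ} (hmono : Monotone c)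
    (hinf : {i | c (i + 1) ≠ c i}.Infinite) (B : ℕ) : ∃ i, B ≤ c i := by
  induction B with
  | zero => exact ⟨0, Nat.zero_le _⟩
  | succ B ih =>
    obtain ⟨i, hi⟩ := ih
    obtain ⟨j, hj, hij⟩ := hinf.exists_gt i
    have hj : c (j + 1) ≠ c j := hj
    have := hmono hij.le
    have : c j ≤ c (j + 1) := hmono j.le_succ
    exact ⟨j + 1, by omega⟩

theorem exists_increment_eq {c : ℕ → ℕ} (hstep : ∀ i, c i ≤ c (i + 1) ∧ c (i + 1) ≤ c i + 1)
    (hinf : {i | c (i + 1) ≠ c i}.Infinite) {N k : ℕ} (hk : c N ≤ k) :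
    ∃ i ≥ N, c i = k ∧ c (i + 1) = k + 1 := by
  have hmono : Monotone c := monotone_nat_of_le_succ fun i => (hstep i).1
  have hex : ∃ j, k < c (N + j) := by
    obtain ⟨i, hi⟩ := exists_le_of_infinite_increments hmono hinf (k + 1)
    exact ⟨i, (Nat.lt_of_succ_le hi).trans_le (hmono (Nat.le_add_left _ _))⟩
  classical
  have hpos : Nat.find hex ≠ 0 := fun h0 => by
    have := Nat.find_spec hex
    rw [h0, Nat.add_zero] at this
    omega
  obtain ⟨j, hj⟩ := Nat.exists_eq_succ_of_ne_zero hpos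
  have hlt : k < c (N + j + 1) := by
    have := Nat.find_spec hex
    rw [hj] at this
    exact this
  have hle : c (N + j) ≤ k := not_lt.1 (Nat.find_min hex (show j < Nat.find hex by omega))
  have := hstep (N + j)
  exact ⟨N + j, Nat.le_add_right _ _, by omega, by omega⟩

theorem exists_infinite_and_eventually_le {V : Type*} [Finite V] (π : ℕ → V) (g : V → ℕ) :
    ∃ m, {i | g (π i) = m}.Infinite ∧ ∀ᶠ i in Filter.atTop, m ≤ g (π i) := by
  classical
  have hex : ∃ m, {i | g (π i) = m}.Infinite := by
    obtain ⟨v, hv⟩ := Finite.exists_infinite_fiber π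
    exact ⟨g v, (Set.infinite_coe_iff.1 hv).mono fun i hi => congrArg g hi⟩
  refine ⟨Nat.find hex, Nat.find_spec hex, ?_⟩
  have hfin : {i | g (π i) < Nat.find hex}.Finite := by
    refine ((Set.finite_Iio (Nat.find hex)).biUnion fun k hk =>
      Set.not_infinite.1 (Nat.find_min hex hk)).subset fun i hi => ?_
    exact Set.mem_biUnion (x := g (π i)) hi rfl
  exact hfin.eventually_atTop_notMem.mono fun i hi => not_lt.1 hi

end Sequences

namespace LiveGameGraph

variable {V : Type*}

section Predecessors

variable (Gm : LiveGameGraph V)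

open scoped Classical in
noncomputable def succWith (S : Set V) (v : V) : V :=
  if h : ∃ w, Gm.E v w ∧ w ∈ S then h.choose else (Gm.succ_nonempty v).choose

variable {Gm} {S T S' T' : Set V} {v w : V}

theorem mem_V0_or_mem_V1 (v : V) : v ∈ Gm.V0 ∨ v ∈ Gm.V1 := by
  have hv : v ∈ Gm.V0 ∪ Gm.V1 := Gm.cover ▸ Set.mem_univ v
  exact hv

theorem notMem_V1_of_mem_V0 (h : v ∈ Gm.V0) : v ∉ Gm.V1 := fun h1 =>
  Set.eq_empty_iff_forall_notMem.1 Gm.disj v ⟨h, h1⟩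

theorem mem_V1_of_El (h : Gm.El v w) : v ∈ Gm.V1 := (Gm.live_sub v w h).1

theorem E_succWith (S : Set V) (v : V) : Gm.E v (Gm.succWith S v) := by
  unfold succWith
  split_ifs with h
  · exact h.choose_spec.1
  · exact (Gm.succ_nonempty v).choose_spec

theorem succWith_mem (h : ∃ w, Gm.E v w ∧ w ∈ S) : Gm.succWith S v ∈ S := by
  rw [succWith, dif_pos h]
  exact h.choose_spec.2

theorem cpre_mono (h : S ⊆ T) : Gm.cpre S ⊆ Gm.cpre T := by
  rintro v (⟨h0, w, hw, hwS⟩ | ⟨h1, hall⟩)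
  · exact Or.inl ⟨h0, w, hw, h hwS⟩
  · exact Or.inr ⟨h1, fun w hw => h (hall w hw)⟩

theorem apre_mono (hS : S ⊆ S') (hT : T ⊆ T') : Gm.apre S T ⊆ Gm.apre S' T' := by
  rintro v (hc | ⟨⟨w, hw, hwT⟩, h1, hall⟩)
  · exact Or.inl (cpre_mono hT hc)
  · exact Or.inr ⟨⟨w, hw, hT hwT⟩, h1, fun w hw => hS (hall w hw)⟩

theorem mem_cpre_of_mem_V0 (h : v ∈ Gm.V0) : v ∈ Gm.cpre S ↔ ∃ w, Gm.E v w ∧ w ∈ S :=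
  ⟨fun hv => hv.elim And.right fun h1 => absurd h1.1 (notMem_V1_of_mem_V0 h),
    fun hv => Or.inl ⟨h, hv⟩⟩

theorem mem_cpre_of_mem_V1 (h : v ∈ Gm.V1) : v ∈ Gm.cpre S ↔ ∀ w, Gm.E v w → w ∈ S :=
  ⟨fun hv => hv.elim (fun h0 => absurd h (notMem_V1_of_mem_V0 h0.1)) And.right,
    fun hv => Or.inr ⟨h, hv⟩⟩

theorem mem_apre_of_mem_V0 (h : v ∈ Gm.V0) : v ∈ Gm.apre S T ↔ ∃ w, Gm.E v w ∧ w ∈ T := by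
  rw [apre, Set.mem_union, mem_cpre_of_mem_V0 h, or_iff_left_iff_imp]
  exact fun hl => absurd hl.2.1 (notMem_V1_of_mem_V0 h)

theorem mem_apre_of_mem_V1 (h : v ∈ Gm.V1) :
    v ∈ Gm.apre S T ↔
      (∀ w, Gm.E v w → w ∈ T) ∨ ((∃ w, Gm.El v w ∧ w ∈ T) ∧ ∀ w, Gm.E v w → w ∈ S) := by
  rw [apre, Set.mem_union, mem_cpre_of_mem_V1 h]
  exact or_congr_right ⟨fun hl => ⟨hl.1, hl.2.2⟩, fun hl => ⟨hl.1, h, hl.2⟩⟩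

theorem Compliant.step_of_memoryless {σ : V → V} {ρ1 : List V → V → V} {v0 : V} {π : ℕ → V}
    (hπ : Gm.Compliant (fun _ v => σ v) ρ1 v0 π) (hρ1 : Gm.Strategy1 ρ1) (i : ℕ) :
    (π i ∈ Gm.V0 ∧ π (i + 1) = σ (π i)) ∨ (π i ∈ Gm.V1 ∧ Gm.E (π i) (π (i + 1))) := by
  rcases mem_V0_or_mem_V1 (π i) with h0 | h1
  · exact Or.inl ⟨h0, (hπ.2 i).1 h0⟩
  · exact Or.inr ⟨h1, (hπ.2 i).2 h1 ▸ hρ1 _ _ h1⟩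

theorem notMem_cpre_compl_iff :
    v ∉ Gm.cpre Sᶜ ↔ (v ∈ Gm.V0 → ∀ w, Gm.E v w → w ∈ S) ∧ (v ∈ Gm.V1 → ∃ w, Gm.E v w ∧ w ∈ S) := by
  rcases mem_V0_or_mem_V1 (Gm := Gm) v with h0 | h1
  · simp [mem_cpre_of_mem_V0 h0, h0, notMem_V1_of_mem_V0 h0]
  · have h0 : v ∉ Gm.V0 := fun h0 => notMem_V1_of_mem_V0 h0 h1
    simp [mem_cpre_of_mem_V1 h1, h0, h1]

theorem mem_of_notMem_cpre_compl (h : v ∉ Gm.cpre Sᶜ)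
    (hw : (v ∈ Gm.V0 ∧ Gm.E v w) ∨ (v ∈ Gm.V1 ∧ w = Gm.succWith S v)) : w ∈ S := by
  rw [notMem_cpre_compl_iff] at h
  rcases hw with ⟨h0, hE⟩ | ⟨h1, rfl⟩
  · exact h.1 h0 w hE
  · exact succWith_mem (h.2 h1)

theorem notMem_apre_compl (h : v ∉ Gm.apre Sᶜ Tᶜ) :
    v ∉ Gm.cpre Tᶜ ∧ ((∃ w, Gm.El v w ∧ w ∉ T) → ∃ w, Gm.E v w ∧ w ∈ S) := by
  refine ⟨fun hc => h (Or.inl hc), fun ⟨w, hl, hw⟩ => ?_⟩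
  by_contra hno
  push Not at hno
  exact h (Or.inr ⟨⟨w, hl, hw⟩, mem_V1_of_El hl, hno⟩)

theorem apre_empty (S : Set V) : Gm.apre S ∅ = ∅ := by
  refine Set.eq_empty_of_forall_notMem fun v hv => ?_
  obtain ⟨w, hw⟩ := Gm.succ_nonempty v
  rcases hv with (⟨-, _, -, hw'⟩ | ⟨-, hall⟩) | ⟨⟨_, -, hw'⟩, -⟩
  exacts [hw', hall w hw, hw']

section Operators

variable (Gm) (r : ℕ) (A : ℕ → Set V)

def coBuchiNu (Y0 X0 : Set V) (a : ℕ) : Set V :=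
  gfpSet fun Ya => Gm.apre Y0 X0 ∪ (A a ∩ Gm.cpre Ya)

def coBuchiUnion (Y0 X0 : Set V) : Set V := ⋃ a ∈ Finset.Icc 1 r, Gm.coBuchiNu A Y0 X0 a

def coBuchiMu (Y0 : Set V) : Set V := lfpSet (Gm.coBuchiUnion r A Y0)

variable {Gm r A} {Y0 Y0' X0 X0' : Set V}

theorem coBuchiNu_eq (Y0 X0 : Set V) (a : ℕ) :
    Gm.coBuchiNu A Y0 X0 a = Gm.apre Y0 X0 ∪ (A a ∩ Gm.cpre (Gm.coBuchiNu A Y0 X0 a)) :=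
  (map_gfpSet fun _ _ h => Set.union_subset_union_right _
    (Set.inter_subset_inter_right _ (cpre_mono h))).symm

theorem coBuchiNu_mono (hY : Y0 ⊆ Y0') (hX : X0 ⊆ X0') (a : ℕ) :
    Gm.coBuchiNu A Y0 X0 a ⊆ Gm.coBuchiNu A Y0' X0' a :=
  gfpSet_mono fun _ => Set.union_subset_union_left _ (apre_mono hY hX)

theorem mem_coBuchiUnion :
    v ∈ Gm.coBuchiUnion r A Y0 X0 ↔ ∃ a ∈ Finset.Icc 1 r, v ∈ Gm.coBuchiNu A Y0 X0 a := by
  simp [coBuchiUnion]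

theorem coBuchiUnion_mono (hY : Y0 ⊆ Y0') (hX : X0 ⊆ X0') :
    Gm.coBuchiUnion r A Y0 X0 ⊆ Gm.coBuchiUnion r A Y0' X0' :=
  Set.biUnion_mono subset_rfl fun a _ => coBuchiNu_mono hY hX a

theorem monotone_coBuchiUnion (Y0 : Set V) : Monotone (Gm.coBuchiUnion r A Y0) :=
  fun _ _ => coBuchiUnion_mono subset_rfl

theorem monotone_coBuchiMu : Monotone (Gm.coBuchiMu r A) :=
  fun _ _ h => lfpSet_mono fun _ => coBuchiUnion_mono h subset_rfl

end Operators

end Predecessors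

section Soundness

variable (Gm : LiveGameGraph V) (r : ℕ) (A : ℕ → Set V) (Z : Set V)

def stageSet (n : ℕ) : Set V := (Gm.coBuchiUnion r A Z)^[n] ∅

noncomputable def stage (v : V) : ℕ := iterRank (Gm.coBuchiUnion r A Z) v

noncomputable def stagePair (v : V) : ℕ :=
  sInf {a | a ∈ Finset.Icc 1 r ∧ v ∈ Gm.coBuchiNu A Z (Gm.stageSet r A Z (Gm.stage r A Z v)) a}

noncomputable def stageNu (v : V) : Set V :=
  Gm.coBuchiNu A Z (Gm.stageSet r A Z (Gm.stage r A Z v)) (Gm.stagePair r A Z v)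

open scoped Classical in
noncomputable def winningMove (v : V) : V :=
  if ∃ w, Gm.E v w ∧ w ∈ Gm.stageSet r A Z (Gm.stage r A Z v) then
    Gm.succWith (Gm.stageSet r A Z (Gm.stage r A Z v)) v
  else Gm.succWith (Gm.stageNu r A Z v) v

variable {Gm r A Z} {v w : V}

theorem E_winningMove (v : V) : Gm.E v (Gm.winningMove r A Z v) := by
  unfold winningMove
  split_ifs <;> exact E_succWith _ v

theorem stage_lt_of_mem_stageSet (hw : w ∈ Gm.stageSet r A Z (Gm.stage r A Z v)) :
    Gm.stage r A Z w < Gm.stage r A Z v :=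
  iterRank_lt hw

theorem finite_live_descents [Finite V] {π : ℕ → V} (hfair : Gm.StronglyFair π) {m : ℕ}
    (hge : ∀ᶠ i in Filter.atTop, m ≤ Gm.stage r A Z (π (i + 1))) :
    {i | Gm.stage r A Z (π i) = m ∧
      π i ∈ Gm.lpre (Gm.stageSet r A Z (Gm.stage r A Z (π i)))}.Finite := by
  refine ((Set.toFinite {v | Gm.stage r A Z v = m ∧
    v ∈ Gm.lpre (Gm.stageSet r A Z (Gm.stage r A Z v))}).biUnion
      (t := fun v => {i | π i = v}) fun v ⟨hvm, w, hE, hw⟩ => ?_).subset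
        fun i hi => Set.mem_biUnion hi rfl
  by_contra hvinf
  obtain ⟨N, hN⟩ := Filter.eventually_atTop.1 hge
  obtain ⟨i, ⟨-, hiw⟩, hi⟩ := (hfair v w hE hvinf).exists_gt N
  have := hN i hi.le
  rw [hiw] at this
  have := stage_lt_of_mem_stageSet hw
  omega

variable (hZ : lfpSet (Gm.coBuchiUnion r A Z) = Z)
include hZ

theorem stageSet_subset (n : ℕ) : Gm.stageSet r A Z n ⊆ Z :=
  (iterate_subset_lfpSet (monotone_coBuchiUnion Z) n).trans hZ.subset

variable [Finite V]

theorem stagePair_spec (hv : v ∈ Z) :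
    Gm.stagePair r A Z v ∈ Finset.Icc 1 r ∧ v ∈ Gm.stageNu r A Z v := by
  have h := mem_map_iterate_iterRank (monotone_coBuchiUnion Z) (hZ.symm.subset hv)
  obtain ⟨a, ha, hva⟩ := mem_coBuchiUnion.1 h
  exact Nat.sInf_mem (s := {a | a ∈ Finset.Icc 1 r ∧
    v ∈ Gm.coBuchiNu A Z (Gm.stageSet r A Z (Gm.stage r A Z v)) a}) ⟨a, ha, hva⟩

theorem stageNu_subset_map (hv : v ∈ Z) :
    Gm.stageNu r A Z v ⊆ Gm.coBuchiUnion r A Z (Gm.stageSet r A Z (Gm.stage r A Z v)) :=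
  fun _ hw => mem_coBuchiUnion.2 ⟨_, (stagePair_spec hZ hv).1, hw⟩

theorem stageNu_subset (hv : v ∈ Z) : Gm.stageNu r A Z v ⊆ Z := by
  refine (stageNu_subset_map hZ hv).trans ?_
  simpa only [stageSet, Function.iterate_succ_apply'] using
    stageSet_subset hZ (Gm.stage r A Z v + 1)

theorem stage_le_of_mem_stageNu (hv : v ∈ Z) (hw : w ∈ Gm.stageNu r A Z v) :
    Gm.stage r A Z w ≤ Gm.stage r A Z v :=
  iterRank_le (stageNu_subset_map hZ hv hw)

theorem stagePair_le_of_mem_stageNu (hv : v ∈ Z) (hw : w ∈ Gm.stageNu r A Z v)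
    (heq : Gm.stage r A Z w = Gm.stage r A Z v) :
    Gm.stagePair r A Z w ≤ Gm.stagePair r A Z v :=
  Nat.sInf_le ⟨(stagePair_spec hZ hv).1, by rw [heq]; exact hw⟩

theorem stage_step_cases (hv : v ∈ Z)
    (hw : (v ∈ Gm.V0 ∧ w = Gm.winningMove r A Z v) ∨ (v ∈ Gm.V1 ∧ Gm.E v w)) :
    w ∈ Gm.stageSet r A Z (Gm.stage r A Z v) ∨
      (v ∈ Gm.lpre (Gm.stageSet r A Z (Gm.stage r A Z v)) ∧ w ∈ Z) ∨
      (v ∈ A (Gm.stagePair r A Z v) ∧ w ∈ Gm.stageNu r A Z v) := by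
  have hY := (stagePair_spec hZ hv).2
  rw [stageNu, coBuchiNu_eq, ← stageNu, Set.mem_union] at hY
  rcases hw with ⟨h0, rfl⟩ | ⟨h1, hE⟩
  · rw [mem_apre_of_mem_V0 h0, Set.mem_inter_iff, mem_cpre_of_mem_V0 h0] at hY
    unfold winningMove
    split_ifs with hlow
    · exact Or.inl (succWith_mem hlow)
    · obtain ⟨hA, hnu⟩ := hY.resolve_left hlow
      exact Or.inr (Or.inr ⟨hA, succWith_mem hnu⟩)
  · rw [mem_apre_of_mem_V1 h1, Set.mem_inter_iff, mem_cpre_of_mem_V1 h1] at hY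
    rcases hY with (hall | ⟨hlive, hall⟩) | ⟨hA, hall⟩
    · exact Or.inl (hall w hE)
    · exact Or.inr (Or.inl ⟨hlive, hall w hE⟩)
    · exact Or.inr (Or.inr ⟨hA, hall w hE⟩)

theorem mem_of_stage_step (hv : v ∈ Z)
    (hw : (v ∈ Gm.V0 ∧ w = Gm.winningMove r A Z v) ∨ (v ∈ Gm.V1 ∧ Gm.E v w)) : w ∈ Z := by
  rcases stage_step_cases hZ hv hw with h | h | h
  · exact stageSet_subset hZ _ h
  · exact h.2
  · exact stageNu_subset hZ hv h.2

/-- Along a fair play from `Z`, the stage settles at the least value visited infinitely often: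
a live edge to a lower stage cannot be ignored forever. -/
theorem eventually_stage_stable {π : ℕ → V} (hπZ : ∀ i, π i ∈ Z)
    (hπ : ∀ i, (π i ∈ Gm.V0 ∧ π (i + 1) = Gm.winningMove r A Z (π i)) ∨
      (π i ∈ Gm.V1 ∧ Gm.E (π i) (π (i + 1))))
    (hfair : Gm.StronglyFair π) :
    ∀ᶠ i in Filter.atTop, π i ∈ A (Gm.stagePair r A Z (π i)) ∧
      Gm.stagePair r A Z (π (i + 1)) ≤ Gm.stagePair r A Z (π i) := by
  obtain ⟨m, hinf, hge⟩ := exists_infinite_and_eventually_le π (Gm.stage r A Z)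
  have hge' := (Filter.tendsto_add_atTop_nat 1).eventually hge
  have hlive := finite_live_descents hfair hge'
  have hstay : ∀ᶠ i in Filter.atTop, Gm.stage r A Z (π i) = m →
      Gm.stage r A Z (π (i + 1)) = m ∧ π i ∈ A (Gm.stagePair r A Z (π i)) ∧
        Gm.stagePair r A Z (π (i + 1)) ≤ Gm.stagePair r A Z (π i) := by
    filter_upwards [hge', hlive.eventually_atTop_notMem] with i hi1 hil hm
    rcases stage_step_cases hZ (hπZ i) (hπ i) with h | h | ⟨hA, hnu⟩
    · have := stage_lt_of_mem_stageSet h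
      omega
    · exact absurd ⟨hm, h.1⟩ hil
    · have hle := stage_le_of_mem_stageNu hZ (hπZ i) hnu
      have heq : Gm.stage r A Z (π (i + 1)) = m := by omega
      exact ⟨heq, hA, stagePair_le_of_mem_stageNu hZ (hπZ i) hnu (heq.trans hm.symm)⟩
  obtain ⟨N, hN⟩ := Filter.eventually_atTop.1 hstay
  obtain ⟨i0, hi0, hNi0⟩ := hinf.exists_gt N
  have hm : ∀ i ≥ i0, Gm.stage r A Z (π i) = m := fun i hi => by
    induction i, hi using Nat.le_induction with
    | base => exact hi0
    | succ i hi ih => exact (hN i (by omega) ih).1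
  exact Filter.eventually_atTop.2 ⟨i0, fun i hi => (hN i (by omega) (hm i hi)).2⟩

theorem winningMove_wins {v0 : V} (hv0 : v0 ∈ Z) :
    Gm.WinsFrom (fun π => ∃ a ∈ Finset.Icc 1 r, ∃ N, ∀ i ≥ N, π i ∈ A a)
      (fun _ v => Gm.winningMove r A Z v) v0 := by
  refine ⟨fun _ v _ => E_winningMove v, fun ρ1 hρ1 π hπ hfair => ?_⟩
  have hstep := hπ.step_of_memoryless hρ1
  have hπZ : ∀ i, π i ∈ Z := fun i => by
    induction i with
    | zero => exact hπ.1 ▸ hv0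
    | succ i ih => exact mem_of_stage_step hZ ih (hstep i)
  obtain ⟨N, hN⟩ := Filter.eventually_atTop.1 (eventually_stage_stable hZ hπZ hstep hfair)
  obtain ⟨D, hD⟩ := exists_forall_ge_eq_of_antitone (f := fun d => Gm.stagePair r A Z (π (N + d)))
    (antitone_nat_of_succ_le fun d => (hN (N + d) (by omega)).2)
  refine ⟨_, (stagePair_spec hZ (hπZ (N + D))).1, N + D, fun i hi => ?_⟩
  obtain ⟨d, rfl⟩ := Nat.exists_eq_add_of_le (show N ≤ i by omega)
  rw [← hD d (by omega)]
  exact (hN (N + d) (by omega)).1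

end Soundness

section SpoilerRegions

variable (Gm : LiveGameGraph V) (r : ℕ) (A : ℕ → Set V)

/-- Approximants of `μB. (coBuchiMu Bᶜ)ᶜ`, the complement of the outer greatest fixpoint. -/
def spoilLevel (n : ℕ) : Set V := (fun B => (Gm.coBuchiMu r A Bᶜ)ᶜ)^[n] ∅

/-- The dual of `coBuchiNu` at level `n + 1` for the pair `t`: from its least fixpoint Player 1
reaches the complement of `A t` while keeping to `spoilLevel (n + 1)`, or escapes to
`spoilLevel n` whenever a live edge leaves `spoilLevel (n + 1)`. -/
def spoilAttr (n t : ℕ) (W : Set V) : Set V :=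
  (Gm.apre (Gm.spoilLevel r A n)ᶜ (Gm.spoilLevel r A (n + 1))ᶜ ∪ (A t ∩ Gm.cpre Wᶜ))ᶜ

def spoilRegion (n t : ℕ) : Set V := lfpSet (Gm.spoilAttr r A n t)

noncomputable def spoilRank (n t : ℕ) (v : V) : ℕ := iterRank (Gm.spoilAttr r A n t) v

variable {Gm r A} {v : V}

theorem monotone_spoilAttr (n t : ℕ) : Monotone (Gm.spoilAttr r A n t) := fun _ _ h =>
  Set.compl_subset_compl.2 <| Set.union_subset_union_right _ <| Set.inter_subset_inter_right _ <|
    cpre_mono (Set.compl_subset_compl.2 h)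

theorem spoilLevel_succ_eq (n : ℕ) :
    Gm.spoilLevel r A (n + 1) =
      (Gm.coBuchiUnion r A (Gm.spoilLevel r A n)ᶜ (Gm.spoilLevel r A (n + 1))ᶜ)ᶜ := by
  have h : Gm.spoilLevel r A (n + 1) = (Gm.coBuchiMu r A (Gm.spoilLevel r A n)ᶜ)ᶜ :=
    Function.iterate_succ_apply' _ n ∅
  rw [h, compl_compl, coBuchiMu, map_lfpSet (monotone_coBuchiUnion _)]

theorem spoilLevel_subset_spoilRegion {t : ℕ} (ht : t ∈ Finset.Icc 1 r) (n : ℕ) :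
    Gm.spoilLevel r A (n + 1) ⊆ Gm.spoilRegion r A n t := by
  intro v hv
  rw [spoilLevel_succ_eq, Set.mem_compl_iff, mem_coBuchiUnion] at hv
  have hv : v ∈ (Gm.coBuchiNu A (Gm.spoilLevel r A n)ᶜ (Gm.spoilLevel r A (n + 1))ᶜ t)ᶜ :=
    fun h => hv ⟨t, ht, h⟩
  rwa [coBuchiNu, compl_gfpSet] at hv

theorem exists_mem_spoilLevel [Finite V] (hv : v ∉ gfpSet (Gm.coBuchiMu r A)) :
    ∃ n, v ∈ Gm.spoilLevel r A (n + 1) := by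
  have hv : v ∈ (gfpSet (Gm.coBuchiMu r A))ᶜ := hv
  rw [compl_gfpSet, mem_lfpSet_iff fun _ _ h =>
    Set.compl_subset_compl.2 (monotone_coBuchiMu (Set.compl_subset_compl.2 h))] at hv
  obtain ⟨_ | n, hn⟩ := hv
  · exact absurd hn (Set.notMem_empty v)
  · exact ⟨n, hn⟩

theorem forcing_of_mem_spoilRegion [Finite V] {n t : ℕ} (hv : v ∈ Gm.spoilRegion r A n t) :
    v ∉ Gm.cpre (Gm.spoilLevel r A (n + 1))ᶜ ∧
      ((∃ w, Gm.El v w ∧ w ∉ Gm.spoilLevel r A (n + 1)) →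
        ∃ w, Gm.E v w ∧ w ∈ Gm.spoilLevel r A n) ∧
      (v ∈ A t → v ∉ Gm.cpre ((Gm.spoilAttr r A n t)^[Gm.spoilRank r A n t v] ∅)ᶜ) := by
  have h := mem_map_iterate_iterRank (monotone_spoilAttr n t) hv
  simp only [spoilAttr, Set.mem_compl_iff, Set.mem_union, Set.mem_inter_iff, not_or,
    not_and] at h
  exact ⟨(notMem_apre_compl h.1).1, (notMem_apre_compl h.1).2, h.2⟩

end SpoilerRegions

/-- Memory of Player 1's spoiling strategy. The play is kept in `spoilRegion level (target)`, with
target pair `phase % r + 1`; `visits v` counts the fairness moves made at `v`, which take the live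
edges of `v` in cyclic order, and `served` holds the vertices that made one in the current phase. -/
structure SpoilerState (V : Type*) where
  level : ℕ
  phase : ℕ
  visits : V → ℕ
  served : Set V

def SpoilerState.target (r : ℕ) (s : SpoilerState V) : ℕ := s.phase % r + 1

theorem SpoilerState.target_mem {r : ℕ} (hr : 1 ≤ r) (s : SpoilerState V) :
    s.target r ∈ Finset.Icc 1 r :=
  Finset.mem_Icc.2 ⟨Nat.le_add_left _ _, Nat.mod_lt _ hr⟩

section SpoilerStrategy

open scoped Classical

variable (Gm : LiveGameGraph V) (r : ℕ) (A : ℕ → Set V)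

noncomputable def liveSuccs [Finite V] (v : V) : List V :=
  (Set.toFinite {w | Gm.El v w}).toFinset.toList

def Escapes (s : SpoilerState V) (v : V) : Prop :=
  ∃ w, Gm.El v w ∧ w ∉ Gm.spoilLevel r A (s.level + 1)

def FairTurn (s : SpoilerState V) (v : V) : Prop :=
  ¬Gm.Escapes r A s v ∧ v ∉ s.served ∧ ∃ w, Gm.El v w

def PhaseEnds (s : SpoilerState V) (v : V) : Prop :=
  ¬Gm.Escapes r A s v ∧ ¬Gm.FairTurn r A s v ∧ v ∉ A (s.target r)

noncomputable def spoilStep (s : SpoilerState V) (v : V) : SpoilerState V :=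
  if Gm.Escapes r A s v then { s with level := s.level - 1 }
  else if Gm.FairTurn r A s v then
    { s with visits := Function.update s.visits v (s.visits v + 1), served := insert v s.served }
  else if v ∉ A (s.target r) then { s with phase := s.phase + 1, served := ∅ }
  else s

noncomputable def spoilMove [Finite V] (s : SpoilerState V) (v : V) : V :=
  if Gm.Escapes r A s v then Gm.succWith (Gm.spoilLevel r A s.level) v
  else if Gm.FairTurn r A s v then
    (Gm.liveSuccs v).getD (s.visits v % (Gm.liveSuccs v).length) v
  else if v ∉ A (s.target r) then Gm.succWith (Gm.spoilLevel r A (s.level + 1)) v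
  else Gm.succWith
    ((Gm.spoilAttr r A s.level (s.target r))^[Gm.spoilRank r A s.level (s.target r) v] ∅) v

def SpoilInv (s : SpoilerState V) (v : V) : Prop :=
  v ∈ Gm.spoilRegion r A s.level (s.target r)

variable {Gm r A} {s : SpoilerState V} {v w : V}

theorem level_spoilStep :
    (Gm.spoilStep r A s v).level = if Gm.Escapes r A s v then s.level - 1 else s.level := by
  unfold spoilStep
  split_ifs <;> rfl

theorem phase_spoilStep :
    (Gm.spoilStep r A s v).phase = if Gm.PhaseEnds r A s v then s.phase + 1 else s.phase := by
  unfold spoilStep PhaseEnds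
  split_ifs <;> simp_all

theorem visits_spoilStep :
    (Gm.spoilStep r A s v).visits =
      if Gm.FairTurn r A s v then Function.update s.visits v (s.visits v + 1) else s.visits := by
  unfold spoilStep
  split_ifs <;> simp_all [FairTurn]

theorem served_spoilStep :
    (Gm.spoilStep r A s v).served =
      if Gm.FairTurn r A s v then insert v s.served
      else if Gm.PhaseEnds r A s v then ∅ else s.served := by
  unfold spoilStep PhaseEnds
  split_ifs <;> simp_all [FairTurn]

theorem spoilStep_of_progress (hE : ¬Gm.Escapes r A s v) (hF : ¬Gm.FairTurn r A s v)
    (hA : v ∈ A (s.target r)) : Gm.spoilStep r A s v = s := by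
  simp [spoilStep, hE, hF, hA]

variable [Finite V]

theorem mem_liveSuccs : w ∈ Gm.liveSuccs v ↔ Gm.El v w := by
  simp [liveSuccs]

theorem El_spoilMove_of_fairTurn (hF : Gm.FairTurn r A s v) :
    Gm.El v (Gm.spoilMove r A s v) := by
  have hne : Gm.liveSuccs v ≠ [] := fun h => by
    obtain ⟨w, hw⟩ := hF.2.2
    simpa [h] using (mem_liveSuccs (Gm := Gm)).2 hw
  have hlt := Nat.mod_lt (s.visits v) (List.length_pos_iff.2 hne)
  simp only [spoilMove, if_neg hF.1, if_pos hF, List.getD_eq_getElem _ _ hlt]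
  exact mem_liveSuccs.1 (List.getElem_mem hlt)

theorem spoilMove_of_fairTurn_eq {c : ℕ} (hF : Gm.FairTurn r A s v)
    (hc : c < (Gm.liveSuccs v).length) (hv : s.visits v % (Gm.liveSuccs v).length = c) :
    Gm.spoilMove r A s v = (Gm.liveSuccs v)[c] := by
  simp only [spoilMove, if_neg hF.1, if_pos hF, hv, List.getD_eq_getElem _ _ hc]

theorem E_spoilMove (s : SpoilerState V) (v : V) : Gm.E v (Gm.spoilMove r A s v) := by
  by_cases hF : Gm.FairTurn r A s v
  · exact (Gm.live_sub _ _ (El_spoilMove_of_fairTurn hF)).2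
  · unfold spoilMove
    split_ifs <;> exact E_succWith _ v

section Step

variable (hinv : Gm.SpoilInv r A s v)
  (hw : (v ∈ Gm.V0 ∧ Gm.E v w) ∨ (v ∈ Gm.V1 ∧ w = Gm.spoilMove r A s v))
include hinv hw

theorem mem_spoilLevel_of_escapes (hE : Gm.Escapes r A s v) :
    w ∈ Gm.spoilLevel r A s.level := by
  obtain ⟨u, hu, -⟩ := id hE
  obtain ⟨h1, rfl⟩ := hw.resolve_left fun h => notMem_V1_of_mem_V0 h.1 (mem_V1_of_El hu)
  simp only [spoilMove, if_pos hE]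
  exact succWith_mem ((forcing_of_mem_spoilRegion hinv).2.1 hE)

theorem mem_spoilLevel_of_not_escapes (hE : ¬Gm.Escapes r A s v)
    (h : Gm.FairTurn r A s v ∨ v ∉ A (s.target r)) :
    w ∈ Gm.spoilLevel r A (s.level + 1) := by
  by_cases hF : Gm.FairTurn r A s v
  · obtain ⟨u, hu⟩ := hF.2.2
    obtain ⟨h1, rfl⟩ := hw.resolve_left fun h => notMem_V1_of_mem_V0 h.1 (mem_V1_of_El hu)
    by_contra hout
    exact hE ⟨_, El_spoilMove_of_fairTurn hF, hout⟩
  · refine mem_of_notMem_cpre_compl (forcing_of_mem_spoilRegion hinv).1 ?_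
    simpa only [spoilMove, if_neg hE, if_neg hF, if_pos (h.resolve_left hF)] using hw

theorem mem_iterate_of_progress (hE : ¬Gm.Escapes r A s v) (hF : ¬Gm.FairTurn r A s v)
    (hA : v ∈ A (s.target r)) :
    w ∈ (Gm.spoilAttr r A s.level (s.target r))^[Gm.spoilRank r A s.level (s.target r) v] ∅ := by
  refine mem_of_notMem_cpre_compl ((forcing_of_mem_spoilRegion hinv).2.2 hA) ?_
  simpa only [spoilMove, if_neg hE, if_neg hF, hA, not_true_eq_false, if_false] using hw

theorem level_ne_zero_of_escapes (hE : Gm.Escapes r A s v) : s.level ≠ 0 := fun h0 => by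
  have := mem_spoilLevel_of_escapes hinv hw hE
  rw [h0] at this
  exact Set.notMem_empty w this

theorem spoilRank_lt_of_progress (hE : ¬Gm.Escapes r A s v) (hF : ¬Gm.FairTurn r A s v)
    (hA : v ∈ A (s.target r)) :
    Gm.spoilRank r A s.level (s.target r) w < Gm.spoilRank r A s.level (s.target r) v :=
  iterRank_lt (mem_iterate_of_progress hinv hw hE hF hA)

theorem spoilInv_spoilStep (hr : 1 ≤ r) : Gm.SpoilInv r A (Gm.spoilStep r A s v) w := by
  unfold SpoilInv
  by_cases hE : Gm.Escapes r A s v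
  · obtain ⟨n, hn⟩ := Nat.exists_eq_succ_of_ne_zero (level_ne_zero_of_escapes hinv hw hE)
    have hw' := mem_spoilLevel_of_escapes hinv hw hE
    rw [hn] at hw'
    simpa [spoilStep, hE, hn, SpoilerState.target] using
      spoilLevel_subset_spoilRegion (s.target_mem hr) n hw'
  by_cases hF : Gm.FairTurn r A s v
  · simpa [spoilStep, hE, hF, SpoilerState.target] using
      spoilLevel_subset_spoilRegion (s.target_mem hr) s.level
        (mem_spoilLevel_of_not_escapes hinv hw hE (Or.inl hF))
  by_cases hA : v ∈ A (s.target r)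
  · rw [spoilStep_of_progress hE hF hA]
    exact iterate_subset_lfpSet (monotone_spoilAttr _ _) _
      (mem_iterate_of_progress hinv hw hE hF hA)
  · have := spoilLevel_subset_spoilRegion (r := r) (A := A)
      (SpoilerState.target_mem hr { s with phase := s.phase + 1, served := ∅ }) s.level
        (mem_spoilLevel_of_not_escapes hinv hw hE (Or.inr hA))
    simpa [spoilStep, hE, hF, hA] using this

end Step

end SpoilerStrategy

section SpoilerRuns

open scoped Classical

variable [Finite V] {Gm : LiveGameGraph V} {r : ℕ} {A : ℕ → Set V}

variable (Gm r A) in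
def IsSpoilerRun (st : ℕ → SpoilerState V) (π : ℕ → V) : Prop :=
  Gm.SpoilInv r A (st 0) (π 0) ∧ ∀ i, st (i + 1) = Gm.spoilStep r A (st i) (π i) ∧
    ((π i ∈ Gm.V0 ∧ Gm.E (π i) (π (i + 1))) ∨
      (π i ∈ Gm.V1 ∧ π (i + 1) = Gm.spoilMove r A (st i) (π i)))

variable {st : ℕ → SpoilerState V} {π : ℕ → V} (hrun : Gm.IsSpoilerRun r A st π)
include hrun

theorem IsSpoilerRun.served_subset {N : ℕ}
    (hN : ∀ i ≥ N, ¬Gm.PhaseEnds r A (st i) (π i)) {i j : ℕ} (hi : N ≤ i) (hij : i ≤ j) :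
    (st i).served ⊆ (st j).served := by
  induction j, hij using Nat.le_induction with
  | base => exact subset_rfl
  | succ j hij ih =>
    refine ih.trans ?_
    rw [(hrun.2 j).1, served_spoilStep, if_neg (hN j (by omega))]
    split_ifs
    exacts [Set.subset_insert _ _, subset_rfl]

theorem IsSpoilerRun.phase_step (i : ℕ) :
    (st (i + 1)).phase =
      if Gm.PhaseEnds r A (st i) (π i) then (st i).phase + 1 else (st i).phase := by
  rw [(hrun.2 i).1, phase_spoilStep]

theorem IsSpoilerRun.visits_step (v : V) (i : ℕ) :
    (st (i + 1)).visits v =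
      if π i = v ∧ Gm.FairTurn r A (st i) (π i) then (st i).visits v + 1 else (st i).visits v := by
  rw [(hrun.2 i).1, visits_spoilStep]
  by_cases hv : π i = v
  · subst hv
    split_ifs <;> simp_all
  · split_ifs <;> simp_all [Function.update_of_ne (Ne.symm hv)]

variable (hr : 1 ≤ r)
include hr

theorem IsSpoilerRun.spoilInv (i : ℕ) : Gm.SpoilInv r A (st i) (π i) := by
  induction i with
  | zero => exact hrun.1
  | succ i ih => exact (hrun.2 i).1 ▸ spoilInv_spoilStep ih (hrun.2 i).2 hr

theorem IsSpoilerRun.eventually_not_escapes :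
    ∀ᶠ i in Filter.atTop, ¬Gm.Escapes r A (st i) (π i) := by
  have hanti : Antitone fun i => (st i).level := antitone_nat_of_succ_le fun i => by
    rw [(hrun.2 i).1, level_spoilStep]
    split_ifs <;> omega
  obtain ⟨N, hN⟩ := exists_forall_ge_eq_of_antitone hanti
  refine Filter.eventually_atTop.2 ⟨N, fun i hi hE => ?_⟩
  have hne := level_ne_zero_of_escapes (hrun.spoilInv hr i) (hrun.2 i).2 hE
  have h1 := hN (i + 1) (by omega)
  rw [(hrun.2 i).1, level_spoilStep, if_pos hE, ← hN i hi] at h1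
  omega

/-- Without phase ends the state eventually freezes (each vertex makes at most one fairness
move per phase), and then every step lowers the rank in the fixed `spoilRegion`. -/
theorem IsSpoilerRun.infinite_phaseEnds : {i | Gm.PhaseEnds r A (st i) (π i)}.Infinite := by
  intro hfin
  obtain ⟨N, hN⟩ := Filter.eventually_atTop.1 <|
    (hrun.eventually_not_escapes hr).and hfin.eventually_atTop_notMem
  have hturns : {i | N ≤ i ∧ Gm.FairTurn r A (st i) (π i)}.Finite := by
    refine Set.Finite.of_finite_image (f := π) (Set.toFinite _)
      fun i ⟨hi, hFi⟩ j ⟨hj, hFj⟩ hij => ?_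
    have key : ∀ i j, N ≤ i → Gm.FairTurn r A (st i) (π i) → Gm.FairTurn r A (st j) (π j) →
        π i = π j → ¬i < j := fun i j hi hFi hFj hij hlt => by
      have h1 : π i ∈ (st (i + 1)).served := by
        rw [(hrun.2 i).1, served_spoilStep, if_pos hFi]
        exact Set.mem_insert _ _
      exact hFj.2.1 (hij ▸ hrun.served_subset (fun k hk => (hN k hk).2) (by omega) hlt h1)
    rcases lt_trichotomy i j with h | h | h
    exacts [absurd h (key i j hi hFi hFj hij), h, absurd h (key j i hj hFj hFi hij.symm)]
  obtain ⟨M, hM⟩ := Filter.eventually_atTop.1 hturns.eventually_atTop_notMem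
  set K := max N M
  have hprog : ∀ i ≥ K, ¬Gm.Escapes r A (st i) (π i) ∧ ¬Gm.FairTurn r A (st i) (π i) ∧
      π i ∈ A ((st i).target r) := fun i hi => by
    have hE := (hN i (by omega)).1
    have hF : ¬Gm.FairTurn r A (st i) (π i) := fun hF => hM i (by omega) ⟨by omega, hF⟩
    refine ⟨hE, hF, ?_⟩
    by_contra hA
    exact (hN i (by omega)).2 ⟨hE, hF, hA⟩
  have hconst : ∀ i ≥ K, st i = st K := fun i hi => by
    induction i, hi using Nat.le_induction with
    | base => rfl
    | succ i hi ih =>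
      obtain ⟨hE, hF, hA⟩ := hprog i hi
      rw [(hrun.2 i).1, spoilStep_of_progress hE hF hA, ih]
  set rank := fun d => Gm.spoilRank r A (st K).level ((st K).target r) (π (K + d))
  have hlt : ∀ d, rank (d + 1) < rank d := fun d => by
    obtain ⟨hE, hF, hA⟩ := hprog (K + d) (by omega)
    have h := spoilRank_lt_of_progress (hrun.spoilInv hr (K + d)) (hrun.2 (K + d)).2 hE hF hA
    rwa [hconst (K + d) (by omega)] at h
  obtain ⟨D, hD⟩ := exists_forall_ge_eq_of_antitone (antitone_nat_of_succ_le fun d => (hlt d).le)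
  exact absurd (hD (D + 1) D.le_succ) (hlt D).ne

theorem IsSpoilerRun.infinite_fairTurns {v w : V} (hl : Gm.El v w) (hinf : {i | π i = v}.Infinite) :
    {i | π i = v ∧ Gm.FairTurn r A (st i) (π i)}.Infinite := by
  intro hfin
  obtain ⟨N, hN⟩ := Filter.eventually_atTop.1 <|
    (hrun.eventually_not_escapes hr).and hfin.eventually_atTop_notMem
  obtain ⟨j, hj, hjN⟩ := (hrun.infinite_phaseEnds hr).exists_gt N
  have hj : Gm.PhaseEnds r A (st j) (π j) := hj
  obtain ⟨i, hiv, hij⟩ := hinf.exists_gt j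
  have hfree : ∀ m, j + 1 ≤ m → v ∉ (st m).served := fun m hm => by
    induction m, hm using Nat.le_induction with
    | base =>
      rw [(hrun.2 j).1, served_spoilStep, if_neg hj.2.1, if_pos hj]
      exact Set.notMem_empty v
    | succ m hm ih =>
      rw [(hrun.2 m).1, served_spoilStep]
      split_ifs with hF
      · rintro (rfl | hmem)
        exacts [(hN m (by omega)).2 ⟨rfl, hF⟩, ih hmem]
      · exact Set.notMem_empty v
      · exact ih
  have hvi : π i = v := hiv
  exact (hN i (by omega)).2 ⟨hvi, (hN i (by omega)).1, hvi ▸ hfree i (by omega), w, hvi ▸ hl⟩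

/-- A vertex visited infinitely often makes a fairness move again in every later phase, and these
moves cycle through its live edges. -/
theorem IsSpoilerRun.stronglyFair : Gm.StronglyFair π := by
  intro v w hl hinf
  have hturns := hrun.infinite_fairTurns hr hl hinf
  obtain ⟨c, hc, hcw⟩ := List.getElem_of_mem (mem_liveSuccs.2 hl)
  have hinc : ∀ i, (st (i + 1)).visits v ≠ (st i).visits v →
      π i = v ∧ Gm.FairTurn r A (st i) (π i) := fun i h => by
    rw [hrun.visits_step] at h
    split_ifs at h with hF
    exacts [hF, absurd rfl h]
  have hstep : ∀ i, (st i).visits v ≤ (st (i + 1)).visits v ∧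
      (st (i + 1)).visits v ≤ (st i).visits v + 1 := fun i => by
    rw [hrun.visits_step]
    split_ifs <;> omega
  have hincs : {i | (st (i + 1)).visits v ≠ (st i).visits v}.Infinite := hturns.mono fun i hi => by
    have hi : π i = v ∧ Gm.FairTurn r A (st i) (π i) := hi
    show (st (i + 1)).visits v ≠ (st i).visits v
    rw [hrun.visits_step, if_pos hi]
    omega
  refine Set.infinite_of_forall_exists_gt fun N => ?_
  set L := (Gm.liveSuccs v).length
  obtain ⟨i, hi, hk, hk1⟩ := exists_increment_eq hstep hincs
    (N := N + 1) (k := L * (st (N + 1)).visits v + c) (by nlinarith)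
  obtain ⟨hvi, hF⟩ := hinc i (by omega)
  refine ⟨i, ⟨hvi, ?_⟩, by omega⟩
  have hV1 : π i ∈ Gm.V1 := hvi ▸ mem_V1_of_El hl
  rw [((hrun.2 i).2.resolve_left fun h => notMem_V1_of_mem_V0 h.1 hV1).2, hvi, ← hcw]
  rw [hvi] at hF
  exact spoilMove_of_fairTurn_eq hF hc (by rw [hk, Nat.mul_add_mod, Nat.mod_eq_of_lt hc])

/-- Phase ends recur and the target pair cycles through `1, …, r`, so each `A a` is left at the end
of infinitely many phases. -/
theorem IsSpoilerRun.exists_notMem {a : ℕ} (ha : a ∈ Finset.Icc 1 r) (N : ℕ) :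
    ∃ i, N ≤ i ∧ π i ∉ A a := by
  have hstep : ∀ i, (st i).phase ≤ (st (i + 1)).phase ∧ (st (i + 1)).phase ≤ (st i).phase + 1 :=
    fun i => by
      rw [hrun.phase_step]
      split_ifs <;> omega
  have hincs : {i | (st (i + 1)).phase ≠ (st i).phase}.Infinite :=
    (hrun.infinite_phaseEnds hr).mono fun i hi => by
      have hi : Gm.PhaseEnds r A (st i) (π i) := hi
      show (st (i + 1)).phase ≠ (st i).phase
      rw [hrun.phase_step, if_pos hi]
      omega
  rw [Finset.mem_Icc] at ha
  obtain ⟨i, hi, hk, hk1⟩ := exists_increment_eq hstep hincs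
    (N := N) (k := r * (st N).phase + (a - 1)) (by nlinarith)
  have hP : Gm.PhaseEnds r A (st i) (π i) := by
    by_contra hP
    rw [hrun.phase_step, if_neg hP] at hk1
    omega
  refine ⟨i, hi, ?_⟩
  have htarget : (st i).target r = a := by
    rw [SpoilerState.target, hk, Nat.mul_add_mod, Nat.mod_eq_of_lt (by omega)]
    omega
  exact htarget ▸ hP.2.2

end SpoilerRuns

section Plays

open scoped Classical

variable (Gm : LiveGameGraph V)

/-- The history and the current vertex after `n` steps of the play of `ρ0` and `ρ1` from `v0`. -/
noncomputable def playState (ρ0 ρ1 : List V → V → V) (v0 : V) : ℕ → List V × V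
  | 0 => ([], v0)
  | n + 1 =>
    let p := playState ρ0 ρ1 v0 n
    (p.1 ++ [p.2], if p.2 ∈ Gm.V0 then ρ0 p.1 p.2 else ρ1 p.1 p.2)

noncomputable def play (ρ0 ρ1 : List V → V → V) (v0 : V) (n : ℕ) : V :=
  (Gm.playState ρ0 ρ1 v0 n).2

variable (ρ0 ρ1 : List V → V → V) (v0 : V)

theorem playState_fst (n : ℕ) :
    (Gm.playState ρ0 ρ1 v0 n).1 = List.ofFn fun j : Fin n => Gm.play ρ0 ρ1 v0 j := by
  induction n with
  | zero => rfl
  | succ n ih =>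
    show (Gm.playState ρ0 ρ1 v0 n).1 ++ [(Gm.playState ρ0 ρ1 v0 n).2] = _
    rw [List.ofFn_succ', List.concat_eq_append, ih]
    rfl

theorem compliant_play : Gm.Compliant ρ0 ρ1 v0 (Gm.play ρ0 ρ1 v0) := by
  refine ⟨rfl, fun i => ⟨fun h0 => ?_, fun h1 => ?_⟩⟩
  all_goals
    show (if _ then _ else _) = _
    rw [← Gm.playState_fst]
  · exact if_pos h0
  · exact if_neg fun h0 => notMem_V1_of_mem_V0 h0 h1

end Plays

section Completeness

variable {Gm : LiveGameGraph V} {r : ℕ} {A : ℕ → Set V}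

variable [Finite V]

theorem exists_spoiling_play (hr : 1 ≤ r) {v0 : V} (hv0 : v0 ∉ gfpSet (Gm.coBuchiMu r A))
    {ρ0 : List V → V → V} (hρ0 : Gm.Strategy0 ρ0) :
    ∃ ρ1, Gm.Strategy1 ρ1 ∧ ∃ π, Gm.Compliant ρ0 ρ1 v0 π ∧ Gm.StronglyFair π ∧
      ∀ a ∈ Finset.Icc 1 r, ∀ N, ∃ i, N ≤ i ∧ π i ∉ A a := by
  obtain ⟨n, hn⟩ := exists_mem_spoilLevel hv0
  let s0 : SpoilerState V := ⟨n, 0, fun _ => 0, ∅⟩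
  let ρ1 : List V → V → V := fun h v => Gm.spoilMove r A (h.foldl (Gm.spoilStep r A) s0) v
  let π := Gm.play ρ0 ρ1 v0
  have hπ : Gm.Compliant ρ0 ρ1 v0 π := Gm.compliant_play ρ0 ρ1 v0
  have hrun : Gm.IsSpoilerRun r A
      (fun i => (List.ofFn fun j : Fin i => π j).foldl (Gm.spoilStep r A) s0) π := by
    have h0 : π 0 = v0 := hπ.1
    refine ⟨spoilLevel_subset_spoilRegion (s0.target_mem hr) n (h0 ▸ hn), fun i => ⟨?_, ?_⟩⟩
    · simp only [List.ofFn_succ', List.concat_eq_append, List.foldl_append]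
      rfl
    rcases mem_V0_or_mem_V1 (π i) with h0 | h1
    · exact Or.inl ⟨h0, by rw [(hπ.2 i).1 h0]; exact hρ0 _ _ h0⟩
    · exact Or.inr ⟨h1, (hπ.2 i).2 h1⟩
  exact ⟨ρ1, fun _ v _ => E_spoilMove _ v, π, hπ, hrun.stronglyFair hr,
    fun a ha N => hrun.exists_notMem hr ha N⟩

/-- Fairness alone is the case of a single empty co-Büchi set, whose fixpoint is empty. -/
theorem exists_fair_play (v0 : V) {ρ0 : List V → V → V} (hρ0 : Gm.Strategy0 ρ0) :
    ∃ ρ1, Gm.Strategy1 ρ1 ∧ ∃ π, Gm.Compliant ρ0 ρ1 v0 π ∧ Gm.StronglyFair π := by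
  have hempty : gfpSet (Gm.coBuchiMu 1 fun _ => ∅) = ∅ := by
    have hnu : ∀ Y0, Gm.coBuchiUnion 1 (fun _ => ∅) Y0 ∅ = ∅ := fun Y0 => by
      simp [coBuchiUnion, coBuchiNu, apre_empty, gfpSet]
    have hmu : ∀ Y0, Gm.coBuchiMu 1 (fun _ => ∅) Y0 = ∅ := fun Y0 =>
      Set.subset_empty_iff.1 (lfpSet_subset (hnu Y0).subset)
    rw [← map_gfpSet monotone_coBuchiMu, hmu]
  obtain ⟨ρ1, hρ1, π, hπ, hfair, -⟩ :=
    exists_spoiling_play (A := fun _ => ∅) le_rfl (hempty ▸ Set.notMem_empty v0) hρ0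
  exact ⟨ρ1, hρ1, π, hπ, hfair⟩

theorem winningRegion_subset_gfpSet :
    Gm.WinningRegion (fun π => ∃ a ∈ Finset.Icc 1 r, ∃ N, ∀ i ≥ N, π i ∈ A a) ⊆
      gfpSet (Gm.coBuchiMu r A) := by
  rintro v ⟨ρ0, hρ0, hwin⟩
  by_contra hv
  rcases Nat.eq_zero_or_pos r with rfl | hr
  · obtain ⟨ρ1, hρ1, π, hπ, hfair⟩ := exists_fair_play v hρ0
    obtain ⟨a, ha, -⟩ := hwin ρ1 hρ1 π hπ hfair
    simp at ha
  · obtain ⟨ρ1, hρ1, π, hπ, hfair, hleave⟩ := exists_spoiling_play hr hv hρ0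
    obtain ⟨a, ha, N, hN⟩ := hwin ρ1 hρ1 π hπ hfair
    obtain ⟨i, hi, hiA⟩ := hleave a ha N
    exact hiA (hN i hi)

end Completeness

end LiveGameGraph

/-- the fixpoint νY_0.μX_0.⋃_a νY_a.[Apre(Y_0,X_0) ∪ (A_a ∩ Cpre(Y_a))]
equals the winning region of Player 0 in the fair adversarial generalized
co-Büchi game, and a memoryless winning Player-0 strategy exists on it. -/
theorem fair_adversarial_gen_cobuchi {V : Type*} [Fintype V]
    (Gm : LiveGameGraph V) (r : ℕ) (A : ℕ → Set V) (Zstar : Set V)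
    (hZ : Zstar = gfpSet fun Y0 => lfpSet fun X0 =>
      ⋃ a ∈ Finset.Icc 1 r, gfpSet fun Ya =>
        Gm.apre Y0 X0 ∪ (A a ∩ Gm.cpre Ya)) :
    Zstar = Gm.WinningRegion
        (fun π => ∃ a ∈ Finset.Icc 1 r, ∃ N, ∀ i ≥ N, π i ∈ A a) ∧
    ∃ σ : V → V, (∀ v ∈ Gm.V0, Gm.E v (σ v)) ∧
      ∀ v0 ∈ Zstar,
        Gm.WinsFrom
          (fun π => ∃ a ∈ Finset.Icc 1 r, ∃ N, ∀ i ≥ N, π i ∈ A a)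
          (fun _ v => σ v) v0 := by
  have hZ : Zstar = gfpSet (Gm.coBuchiMu r A) := hZ
  subst hZ
  have hfix := map_gfpSet (LiveGameGraph.monotone_coBuchiMu (Gm := Gm) (r := r) (A := A))
  exact ⟨Set.Subset.antisymm (fun v hv => ⟨_, LiveGameGraph.winningMove_wins hfix hv⟩)
      LiveGameGraph.winningRegion_subset_gfpSet,
    Gm.winningMove r A _, fun v _ => LiveGameGraph.E_winningMove v,
    fun v hv => LiveGameGraph.winningMove_wins hfix hv⟩
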